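/- Let B be an n×n real skew-symmetric Toeplitz matrix with n odd. Then det(B_{n-1}(1,1)) = det(B_{n-1}(1,2)), where B_r(i,j) denotes the r×r contiguous submatrix. -/

import Mathlib

open Matrix

/-
Write `B i j = b (j - i)` with `b` odd and let `n = 2m + 2` be the size of the two submatrices
`M = (b (j - i))` and `N = (b (j - i + 1))`. Rotating the columns of `N` cyclically (a permutation
of sign `-1`) gives `M` with its first column replaced by `w = (b (n - i))`, so `det M - det N` is the
determinant of the matrix `W` obtained from `M` by adding `w` to its first column.

Index rows and columns of `W` by `ℤ/n`. Away from row `0`, `W (-j) (-l) = -W j l`, because `b` is odd.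
Hence for every `u` with `u 0 = 0` and `u (-j) = u j`, the row vector `u ᵥ* W` is odd on `ℤ/n`, so it
vanishes as soon as its coordinates `1, …, m` do. Such vectors `u` form a space of dimension `m + 1`,
so one of them is nonzero with `u ᵥ* W = 0`, and `det W = 0`.
-/

theorem Fin.intCast_val_neg {n : ℕ} [NeZero n] {j : Fin n} (hj : j ≠ 0) :
    (((-j : Fin n) : ℕ) : ℤ) = n - j := by
  rw [Fin.val_neg, if_neg hj, Nat.cast_sub j.isLt.le]

section CommRing

variable {R : Type*} [CommRing R]

theorem vecMul_apply_neg {n : ℕ} [NeZero n] {u : Fin n → R} {W : Matrix (Fin n) (Fin n) R}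
    (hu0 : u 0 = 0) (hu : ∀ j, u (-j) = u j) (hW : ∀ j l, j ≠ 0 → W (-j) (-l) = -W j l)
    (l : Fin n) : (u ᵥ* W) (-l) = -(u ᵥ* W) l := by
  calc (u ᵥ* W) (-l) = ∑ j, u j * W j (-l) := rfl
    _ = ∑ j, u (-j) * W (-j) (-l) := (Fintype.sum_equiv (Equiv.neg _) _ _ fun _ => rfl).symm
    _ = ∑ j, -(u j * W j l) := by
        refine Finset.sum_congr rfl fun j _ => ?_
        rcases eq_or_ne j 0 with rfl | hj
        · simp [hu0]
        · rw [hu, hW j l hj, mul_neg]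
    _ = -(u ᵥ* W) l := Finset.sum_neg_distrib _

def toeplitz (n : ℕ) (b : ℤ → R) : Matrix (Fin n) (Fin n) R :=
  of fun i j => b (j - i)

theorem exists_odd_symbol_of_skew_toeplitz {n : ℕ} (B : Matrix (Fin (n + 1)) (Fin (n + 1)) R)
    (hskew : Bᵀ = -B)
    (hToeplitz : ∀ i j i' j' : Fin (n + 1), (i : ℕ) + j' = i' + j → B i j = B i' j') :
    ∃ b : ℤ → R, (∀ z, b (-z) = -b z) ∧ ∀ i j, B i j = b (j - i) := by
  -- `b z` is the entry at `(max (-z) 0, max z 0)`, so skew-symmetry makes `b` odd.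
  refine ⟨fun z => B (Fin.clamp (-z).toNat n) (Fin.clamp z.toNat n), fun z => ?_, fun i j => ?_⟩
  · simpa using congrFun (congrFun hskew (Fin.clamp (-z).toNat n)) (Fin.clamp z.toNat n)
  · apply hToeplitz
    simp only [Fin.coe_clamp]
    omega

theorem det_toeplitz_shift (k : ℕ) (b : ℤ → R) :
    (toeplitz (k + 1) fun z => b (z + 1)).det =
      (-1) ^ k * ((toeplitz (k + 1) b).updateCol 0 fun i => b (k + 1 - i)).det := by
  have hrot : (toeplitz (k + 1) fun z => b (z + 1)) =
      ((toeplitz (k + 1) b).updateCol 0 fun i => b (k + 1 - i)).submatrix id (finRotate (k + 1)) := by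
    ext i j
    rcases Fin.eq_castSucc_or_eq_last j with ⟨j, rfl⟩ | rfl
    · simp only [toeplitz, of_apply, Fin.val_castSucc, submatrix_apply, id_eq, finRotate_apply,
        Fin.coeSucc_eq_succ, ne_eq, Fin.succ_ne_zero, not_false_eq_true, updateCol_ne, Fin.val_succ,
        Nat.cast_add, Nat.cast_one]
      congr 1
      ring
    · simp only [toeplitz, of_apply, Fin.val_last, submatrix_apply, id_eq, finRotate_apply,
        Fin.last_add_one, updateCol_self]
      congr 1
      ring
  rw [hrot, det_permute', sign_finRotate]
  simp

theorem updateCol_toeplitz_apply_neg_neg {m : ℕ} {b : ℤ → R} (hb : ∀ z, b (-z) = -b z)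
    {j : Fin (2 * m + 2)} (hj : j ≠ 0) (l : Fin (2 * m + 2)) :
    ((toeplitz (2 * m + 2) b).updateCol 0 (fun i => b (-i) + b (2 * m + 2 - i))) (-j) (-l) =
      -((toeplitz (2 * m + 2) b).updateCol 0 (fun i => b (-i) + b (2 * m + 2 - i))) j l := by
  have hj' := Fin.intCast_val_neg hj
  push_cast at hj'
  rcases eq_or_ne l 0 with rfl | hl
  · simp only [neg_zero, updateCol_self, hj']
    rw [hb, show (2 * m + 2 : ℤ) - (2 * m + 2 - j) = -(-j) by ring, hb]
    ring
  · have hl' := Fin.intCast_val_neg hl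
    push_cast at hl'
    simp only [toeplitz, updateCol_ne (neg_ne_zero.mpr hl), updateCol_ne hl, of_apply, hj', hl']
    rw [show (2 * m + 2 - l : ℤ) - (2 * m + 2 - j) = -(l - j) by ring, hb]

/- Row `k` is the indicator of `{k + 1, -(k + 1)} ⊆ ℤ/(2m + 2)`; the rows span the vectors `u`
with `u 0 = 0` and `u (-j) = u j`. -/
def pairIndicator (m : ℕ) : Matrix (Fin (m + 1)) (Fin (2 * m + 2)) R :=
  of fun k j => if (j : ℕ) = k + 1 ∨ (j : ℕ) + k + 1 = 2 * m + 2 then 1 else 0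

theorem pairIndicator_apply_zero (m : ℕ) (k : Fin (m + 1)) : pairIndicator (R := R) m k 0 = 0 := by
  have := k.isLt
  exact if_neg (by simp only [Fin.val_zero]; omega)

theorem pairIndicator_apply_neg (m : ℕ) (k : Fin (m + 1)) (j : Fin (2 * m + 2)) :
    pairIndicator (R := R) m k (-j) = pairIndicator m k j := by
  rcases eq_or_ne j 0 with rfl | hj
  · rw [neg_zero]
  · have := j.isLt
    simp only [pairIndicator, of_apply, Fin.val_neg, if_neg hj]
    exact if_congr (by omega) rfl rfl

theorem vecMul_pairIndicator_apply_succ {m : ℕ} (c : Fin (m + 1) → R) (k : Fin (m + 1)) :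
    (c ᵥ* pairIndicator m) ⟨k + 1, by omega⟩ = c k := by
  rw [vecMul, dotProduct, Finset.sum_eq_single k]
  · simp [pairIndicator]
  · intro k' _ hk'
    have : (k' : ℕ) ≠ k := Fin.val_ne_of_ne hk'
    simp only [pairIndicator, of_apply]
    rw [if_neg (by omega), mul_zero]
  · simp

end CommRing

section Field

variable {K : Type*} [Field K]

theorem exists_ne_zero_vecMul_eq_zero {ι κ : Type*} [Fintype ι] [Fintype κ] (A : Matrix ι κ K)
    (h : Fintype.card κ < Fintype.card ι) : ∃ c ≠ 0, c ᵥ* A = 0 := by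
  obtain ⟨c, hc, hc0⟩ := Submodule.exists_mem_ne_zero_of_ne_bot
    (LinearMap.ker_ne_bot_of_finrank_lt (f := A.vecMulLinear) (by simpa using h))
  exact ⟨c, hc0, hc⟩

theorem eq_zero_of_apply_neg_eq_neg [NeZero (2 : K)] {m : ℕ} {g : Fin (2 * m + 2) → K}
    (hneg : ∀ l, g (-l) = -g l) (hlow : ∀ l : Fin (2 * m + 2), 1 ≤ (l : ℕ) → (l : ℕ) ≤ m → g l = 0) :
    g = 0 := by
  have h_fixed : ∀ l, -l = l → g l = 0 := fun l hl => by
    have h := hneg l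
    rw [hl, eq_neg_iff_add_eq_zero, ← two_mul] at h
    exact (mul_eq_zero.mp h).resolve_left two_ne_zero
  funext l
  have := l.isLt
  rcases eq_or_ne l 0 with rfl | hl
  · exact h_fixed 0 neg_zero
  have hval := Fin.val_neg l
  rw [if_neg hl] at hval
  rcases lt_trichotomy (l : ℕ) (m + 1) with hlt | heq | hgt
  · exact hlow l (by omega) (by omega)
  · exact h_fixed l (Fin.ext (by omega))
  · rw [← neg_neg l, hneg, hlow (-l) (by omega) (by omega), neg_zero, Pi.zero_apply]

theorem det_updateCol_toeplitz_eq_zero [NeZero (2 : K)] (m : ℕ) {b : ℤ → K}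
    (hb : ∀ z, b (-z) = -b z) :
    ((toeplitz (2 * m + 2) b).updateCol 0 (fun i => b (-i) + b (2 * m + 2 - i))).det = 0 := by
  set W := (toeplitz (2 * m + 2) b).updateCol 0 (fun i => b (-i) + b (2 * m + 2 - i))
  let col : Fin m → Fin (2 * m + 2) := fun l => ⟨l + 1, by omega⟩
  obtain ⟨c, hc, hcW⟩ :=
    exists_ne_zero_vecMul_eq_zero ((pairIndicator m * W).submatrix id col) (by simp)
  have hu : c ᵥ* pairIndicator m ≠ 0 := fun h =>
    hc (funext fun k => by simpa [h] using (vecMul_pairIndicator_apply_succ c k).symm)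
  have hu0 : (c ᵥ* pairIndicator m) 0 = 0 := by
    simp [vecMul, dotProduct, pairIndicator_apply_zero]
  have hu_neg : ∀ j, (c ᵥ* pairIndicator m) (-j) = (c ᵥ* pairIndicator m) j := by
    simp [vecMul, dotProduct, pairIndicator_apply_neg]
  refine exists_vecMul_eq_zero_iff.mp ⟨_, hu, eq_zero_of_apply_neg_eq_neg
    (vecMul_apply_neg hu0 hu_neg fun j l hj => updateCol_toeplitz_apply_neg_neg hb hj l)
    fun l h1 h2 => ?_⟩
  have hl : col ⟨l - 1, by omega⟩ = l := Fin.ext (by simp only [col]; omega)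
  calc (c ᵥ* pairIndicator m ᵥ* W) l = (c ᵥ* (pairIndicator m * W)) (col ⟨l - 1, by omega⟩) := by
        rw [vecMul_vecMul, hl]; rfl
    _ = 0 := congrFun hcW _

theorem det_toeplitz_eq_det_toeplitz_shift [NeZero (2 : K)] {n : ℕ} (hn : Even n) {b : ℤ → K}
    (hb : ∀ z, b (-z) = -b z) :
    (toeplitz n b).det = (toeplitz n fun z => b (z + 1)).det := by
  obtain ⟨m, rfl | rfl⟩ : ∃ m, n = 0 ∨ n = 2 * m + 2 := by
    obtain ⟨k, rfl⟩ := hn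
    rcases k with _ | m
    · exact ⟨0, Or.inl rfl⟩
    · exact ⟨m, Or.inr (by ring)⟩
  · simp
  have hcol : (fun i : Fin (2 * m + 2) => b (-i) + b (2 * m + 2 - i)) =
      (fun i => toeplitz (2 * m + 2) b i 0) + fun i : Fin (2 * m + 2) => b (2 * m + 2 - i) := by
    ext i
    simp [toeplitz]
  have hsplit := det_updateCol_toeplitz_eq_zero m hb
  rw [hcol, det_updateCol_add, updateCol_eq_self] at hsplit
  have hshift : (toeplitz (2 * m + 2) fun z => b (z + 1)).det =
      -((toeplitz (2 * m + 2) b).updateCol 0 fun i => b (2 * m + 2 - i)).det := by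
    simpa [pow_succ, pow_mul, add_assoc, one_add_one_eq_two] using det_toeplitz_shift (2 * m + 1) b
  rw [hshift]
  linear_combination hsplit

end Field

theorem stmt_7 (n : ℕ) (hn : Odd (n + 1)) (B : Matrix (Fin (n + 1)) (Fin (n + 1)) ℝ)
    (hskew : Bᵀ = -B)
    (hToeplitz : ∀ i j i' j' : Fin (n + 1),
      (i : ℕ) + (j' : ℕ) = (i' : ℕ) + (j : ℕ) → B i j = B i' j') :
    (B.submatrix Fin.castSucc Fin.castSucc).det = (B.submatrix Fin.castSucc Fin.succ).det := by
  obtain ⟨b, hb, hB⟩ := exists_odd_symbol_of_skew_toeplitz B hskew hToeplitz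
  have hM : B.submatrix Fin.castSucc Fin.castSucc = toeplitz n b := by
    ext i j
    simp [toeplitz, hB]
  have hN : B.submatrix Fin.castSucc Fin.succ = toeplitz n fun z => b (z + 1) := by
    ext i j
    simp only [submatrix_apply, hB, Fin.val_succ, Nat.cast_add, Nat.cast_one, Fin.val_castSucc,
      toeplitz, of_apply]
    congr 1
    ring
  rw [hM, hN]
  exact det_toeplitz_eq_det_toeplitz_shift (by simpa [Nat.odd_add_one] using hn) hb
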